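/- Let S be a monoid and let C be a set (not a proper class) of S-maps that is closed under coproducts. Let R = C^□ and L = □R. Then (L, R) is a weak factorization system. -/

import Mathlib

universe u

/-- A right `S`-act: a set with a right action of the monoid `S`. -/
structure SAct (S : Type u) [Monoid S] : Type (u + 1) where
  carrier : Type u
  act : carrier → S → carrier
  act_one : ∀ a, act a 1 = a
  act_mul : ∀ a s t, act (act a s) t = act a (s * t)

/-- A map of right `S`-acts. -/
structure SMap {S : Type u} [Monoid S] (A B : SAct S) : Type u where
  toFun : A.carrier → B.carrier
  map_act : ∀ a s, toFun (A.act a s) = B.act (toFun a) s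

namespace SMap

variable {S : Type u} [Monoid S]

/-- Composition of `S`-maps. -/
def comp {A B C : SAct S} (g : SMap B C) (f : SMap A B) : SMap A C :=
  ⟨fun a => g.toFun (f.toFun a), fun a s => by
    show g.toFun (f.toFun (A.act a s)) = C.act (g.toFun (f.toFun a)) s
    rw [f.map_act, g.map_act]⟩

/-- The identity `S`-map. -/
def id (A : SAct S) : SMap A A := ⟨fun a => a, fun _ _ => rfl⟩

end SMap

variable {S : Type u} [Monoid S]

/-- `f` has the left lifting property with respect to `g` (equivalently, `g` has the
right lifting property with respect to `f`). -/
def Lifts {A B C D : SAct S} (f : SMap A B) (g : SMap C D) : Prop :=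
  ∀ (u : SMap A C) (v : SMap B D), g.comp u = v.comp f →
    ∃ h : SMap B C, h.comp f = u ∧ g.comp h = v

/-- A class of `S`-maps. -/
def MapClass (S : Type u) [Monoid S] : Type (u + 1) :=
  ∀ {A B : SAct S}, SMap A B → Prop

/-- `C^□`: the class of maps with the right lifting property with respect to every map of `C`. -/
def rlpC (C : MapClass S) : MapClass S :=
  fun {_ _} g => ∀ {A B : SAct S} (f : SMap A B), C f → Lifts f g

/-- `□C`: the class of maps with the left lifting property with respect to every map of `C`. -/
def llpC (C : MapClass S) : MapClass S :=
  fun {_ _} f => ∀ {C' D : SAct S} (g : SMap C' D), C g → Lifts f g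

/-- `cof(C) = □(C^□)`. -/
def cofC (C : MapClass S) : MapClass S := llpC (rlpC C)

/-- `fib(C) = (□C)^□`. -/
def fibC (C : MapClass S) : MapClass S := rlpC (llpC C)

/-- `(L, R)` is a weak factorization system. -/
structure IsWFS (L R : MapClass S) : Prop where
  rlp_eq : ∀ {A B : SAct S} (g : SMap A B), R g ↔ rlpC L g
  llp_eq : ∀ {A B : SAct S} (f : SMap A B), L f ↔ llpC R f
  factor : ∀ {A B : SAct S} (h : SMap A B),
    ∃ (C : SAct S) (f : SMap A C) (g : SMap C B), L f ∧ R g ∧ g.comp f = h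

/-- `g : A → C` is a retract of `f : A → B`:  there are `α : C → B`, `β : B → C` with
`β ∘ α = 1`, `α ∘ g = f` and `β ∘ f = g`. -/
def RetractOfMap {A B C : SAct S} (g : SMap A C) (f : SMap A B) : Prop :=
  ∃ (α : SMap C B) (β : SMap B C),
    β.comp α = SMap.id C ∧ α.comp g = f ∧ β.comp f = g

/-- The square with sides `f : A → B`, `u : A → X`, `fbar : X → P`, `v : B → P` is a pushout
square (i.e. `fbar` is the pushout of `f` along `u`). -/
structure IsPushoutSq {A B X P : SAct S}
    (f : SMap A B) (u : SMap A X) (fbar : SMap X P) (v : SMap B P) : Prop where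
  comm : fbar.comp u = v.comp f
  ue : ∀ ⦃Q : SAct S⦄ (g' : SMap X Q) (v' : SMap B Q), g'.comp u = v'.comp f →
    ∃! k : SMap P Q, k.comp fbar = g' ∧ k.comp v = v'

/-- The square with sides `pr1 : P → D`, `pr2 : P → A`, `g : A → B`, `v : D → B` is a
pullback square (i.e. `pr1` is the pullback of `g` along `v`). -/
structure IsPullbackSq {P A D B : SAct S}
    (pr1 : SMap P D) (pr2 : SMap P A) (g : SMap A B) (v : SMap D B) : Prop where
  comm : g.comp pr2 = v.comp pr1
  ue : ∀ ⦃Q : SAct S⦄ (q1 : SMap Q D) (q2 : SMap Q A), g.comp q2 = v.comp q1 →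
    ∃! k : SMap Q P, pr1.comp k = q1 ∧ pr2.comp k = q2

/-- `f` is an isomorphism of `S`-acts. -/
def IsIsoMap {A B : SAct S} (f : SMap A B) : Prop :=
  ∃ g : SMap B A, g.comp f = SMap.id A ∧ f.comp g = SMap.id B

/-- A directed system of `S`-acts indexed by the ordinals `< lam`. -/
structure OSeq (S : Type u) [Monoid S] (lam : Ordinal.{u}) where
  obj : ∀ a : Ordinal.{u}, a < lam → SAct S
  map : ∀ (a b : Ordinal.{u}) (hab : a ≤ b) (hb : b < lam),
    SMap (obj a (lt_of_le_of_lt hab hb)) (obj b hb)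
  map_id : ∀ (a : Ordinal.{u}) (ha : a < lam), map a a le_rfl ha = SMap.id (obj a ha)
  map_comp : ∀ (a b c : Ordinal.{u}) (hab : a ≤ b) (hbc : b ≤ c) (hc : c < lam),
    (map b c hbc hc).comp (map a b hab (lt_of_le_of_lt hbc hc)) = map a c (le_trans hab hbc) hc

/-- A cocone over a directed system of `S`-acts indexed by ordinals `< lam`. -/
structure OCocone {lam : Ordinal.{u}} (F : OSeq S lam) where
  pt : SAct S
  ι : ∀ (a : Ordinal.{u}) (ha : a < lam), SMap (F.obj a ha) pt
  fac : ∀ (a b : Ordinal.{u}) (hab : a ≤ b) (hb : b < lam),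
    (ι b hb).comp (F.map a b hab hb) = ι a (lt_of_le_of_lt hab hb)

/-- A cocone is a (directed) colimit if it satisfies the universal property. -/
def IsColimitO {lam : Ordinal.{u}} {F : OSeq S lam} (c : OCocone F) : Prop :=
  ∀ d : OCocone F, ∃! k : SMap c.pt d.pt, ∀ (a : Ordinal.{u}) (ha : a < lam),
    k.comp (c.ι a ha) = d.ι a ha

/-- Restriction of a directed system to the ordinals `< γ`. -/
def OSeq.restrict {lam : Ordinal.{u}} (F : OSeq S lam) (γ : Ordinal.{u}) (hγ : γ ≤ lam) :
    OSeq S γ where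
  obj a ha := F.obj a (lt_of_lt_of_le ha hγ)
  map a b hab hb := F.map a b hab (lt_of_lt_of_le hb hγ)
  map_id a ha := F.map_id a _
  map_comp a b c hab hbc hc := F.map_comp a b c hab hbc _

/-- The cocone over the restriction to `γ` with vertex `F.obj γ`. -/
def OSeq.coconeAt {lam : Ordinal.{u}} (F : OSeq S lam) (γ : Ordinal.{u}) (hγ : γ < lam) :
    OCocone (F.restrict γ hγ.le) where
  pt := F.obj γ hγ
  ι a ha := F.map a γ ha.le hγ
  fac a b hab hb := F.map_comp a b γ hab hb.le hγ

/-- A `λ`-sequence: a directed system of `S`-acts indexed by the ordinals `< λ`, together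
with a directed colimit, which is continuous at every limit ordinal `γ ≤ λ`. -/
structure LambdaSequence (S : Type u) [Monoid S] (lam : Ordinal.{u}) where
  seq : OSeq S lam
  cocone : OCocone seq
  isColimit : IsColimitO cocone
  continuity : ∀ (γ : Ordinal.{u}) (hγ : γ < lam), Order.IsSuccLimit γ →
    IsColimitO (seq.coconeAt γ hγ)

/-- An ordinal `lam` is `γ`-filtered: it is a limit ordinal and every subset of `lam` of
cardinality at most `γ` has supremum `< lam`. -/
def IsGammaFiltered (γ : Cardinal.{u}) (lam : Ordinal.{u}) : Prop :=
  Order.IsSuccLimit lam ∧ ∀ A : Set Ordinal.{u}, A ⊆ Set.Iio lam →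
    Cardinal.mk A ≤ Cardinal.lift.{u + 1} γ → sSup A < lam

/-- A split monomorphism. -/
def SplitMonoM {A B : SAct S} (f : SMap A B) : Prop :=
  ∃ γ : SMap B A, γ.comp f = SMap.id A

/-- A split epimorphism. -/
def SplitEpiM {A B : SAct S} (f : SMap A B) : Prop :=
  ∃ γ : SMap B A, f.comp γ = SMap.id B

/-- A unitary monomorphism of `S`-acts. -/
def IsUnitaryMono {X Y : SAct S} (f : SMap X Y) : Prop :=
  Function.Injective f.toFun ∧
    ∀ (y : Y.carrier) (s : S), Y.act y s ∈ Set.range f.toFun → y ∈ Set.range f.toFun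

/-- The class of unitary monomorphisms. -/
def UnitaryClass (S : Type u) [Monoid S] : MapClass S := fun {_ _} f => IsUnitaryMono f

/-- The class of split epimorphisms. -/
def SplitEpiClass (S : Type u) [Monoid S] : MapClass S := fun {_ _} f => SplitEpiM f

/-- `P` is projective with respect to the map `f : A → B`. -/
def ProjWrt (P : SAct S) {A B : SAct S} (f : SMap A B) : Prop :=
  ∀ g : SMap P B, ∃ h : SMap P A, f.comp h = g

/-- `Q` is a retract of the act `P`. -/
def ActRetract (Q P : SAct S) : Prop :=
  ∃ (α : SMap Q P) (β : SMap P Q), β.comp α = SMap.id Q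

/-- The coproduct (disjoint union) of two `S`-acts. -/
def SAct.coprod (A B : SAct S) : SAct S where
  carrier := A.carrier ⊕ B.carrier
  act x s := Sum.elim (fun a => Sum.inl (A.act a s)) (fun b => Sum.inr (B.act b s)) x
  act_one x := by cases x <;> simp [SAct.act_one]
  act_mul x s t := by cases x <;> simp [SAct.act_mul]

/-- The coproduct (disjoint union) of a family of `S`-acts. -/
def SAct.sigmaCoprod {ι : Type u} (F : ι → SAct S) : SAct S where
  carrier := Σ i, (F i).carrier
  act x s := ⟨x.1, (F x.1).act x.2 s⟩
  act_one x := by cases x with | mk i a => exact congrArg (Sigma.mk i) ((F i).act_one a)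
  act_mul x s t := by cases x with | mk i a => exact congrArg (Sigma.mk i) ((F i).act_mul a s t)

/-- The coproduct of a family of `S`-maps. -/
def coprodMap {ι : Type u} {A B : ι → SAct S} (f : ∀ i, SMap (A i) (B i)) :
    SMap (SAct.sigmaCoprod A) (SAct.sigmaCoprod B) where
  toFun x := ⟨x.1, (f x.1).toFun x.2⟩
  map_act x s := congrArg (Sigma.mk x.1) ((f x.1).map_act x.2 s)

/-- An isomorphism class predicate: `A` and `B` are isomorphic `S`-acts. -/
def ActIso (A B : SAct S) : Prop := ∃ f : SMap A B, Function.Bijective f.toFun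

/-- `B` is a direct summand of `A`. -/
def IsDirectSummand (B A : SAct S) : Prop := ∃ C : SAct S, ActIso (SAct.coprod B C) A

/-- The subact of `Y` on a subset `T` closed under the action. -/
def SAct.sub (Y : SAct S) (T : Set Y.carrier) (hT : ∀ t ∈ T, ∀ s : S, Y.act t s ∈ T) :
    SAct S where
  carrier := {y // y ∈ T}
  act t s := ⟨Y.act t.1 s, hT t.1 t.2 s⟩
  act_one t := Subtype.ext (Y.act_one t.1)
  act_mul t s r := Subtype.ext (Y.act_mul t.1 s r)

/-- A class of `S`-acts. -/
def ActClass (S : Type u) [Monoid S] : Type (u + 1) := SAct S → Prop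

/-- The class `R_X` of maps with respect to which every act of `X` is projective. -/
def RXClass (𝒳 : ActClass S) : MapClass S :=
  fun {_ _} f => ∀ P : SAct S, 𝒳 P → ProjWrt P f

/-- The class `U_X` of unitary monomorphisms `f : X → Y` with `Y ∖ im f ∈ X`. -/
def UXClass (𝒳 : ActClass S) : MapClass S :=
  fun {_ Y} f =>
    ∃ (_ : Function.Injective f.toFun)
      (hu : ∀ (y : Y.carrier) (s : S),
        Y.act y s ∈ Set.range f.toFun → y ∈ Set.range f.toFun),
      𝒳 (Y.sub (Set.range f.toFun)ᶜ (fun t ht s hmem => ht (hu t s hmem)))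

/-- Every `S`-act has an `𝒳`-precover. -/
def HasPrecover (𝒳 : ActClass S) (A : SAct S) : Prop :=
  ∃ (P : SAct S) (g : SMap P A), 𝒳 P ∧
    ∀ ⦃P' : SAct S⦄ (g' : SMap P' A), 𝒳 P' → ∃ f : SMap P' P, g.comp f = g'

/-- A projective `S`-act. -/
def ProjectiveAct (P : SAct S) : Prop :=
  ∀ ⦃A B : SAct S⦄ (f : SMap A B), Function.Surjective f.toFun → ProjWrt P f

/-- The class of all surjective `S`-maps (epimorphisms). -/
def EpiClass (S : Type u) [Monoid S] : MapClass S :=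
  fun {_ _} f => Function.Surjective f.toFun

/-- The free `S`-act on `n` generators. -/
def freeAct (S : Type u) [Monoid S] (n : ℕ) : SAct S where
  carrier := Fin n × S
  act p s := (p.1, p.2 * s)
  act_one p := by simp
  act_mul p s t := by simp [mul_assoc]

/-- `r` is a congruence on the `S`-act `A`. -/
def IsCong (A : SAct S) (r : A.carrier → A.carrier → Prop) : Prop :=
  Equivalence r ∧ ∀ (a b : A.carrier) (s : S), r a b → r (A.act a s) (A.act b s)

/-- A finitely presented `S`-act: a quotient of a finitely generated free act by a
finitely generated congruence. -/
def FinPresented (M : SAct S) : Prop :=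
  ∃ (n : ℕ) (q : SMap (freeAct S n) M), Function.Surjective q.toFun ∧
    ∃ (m : ℕ) (p : Fin m → (freeAct S n).carrier × (freeAct S n).carrier),
      (∀ i, q.toFun (p i).1 = q.toFun (p i).2) ∧
      ∀ r : (freeAct S n).carrier → (freeAct S n).carrier → Prop, IsCong (freeAct S n) r →
        (∀ i, r (p i).1 (p i).2) →
        ∀ x y, q.toFun x = q.toFun y → r x y

/-- A pure epimorphism of `S`-acts. -/
def IsPureEpi {X Y : SAct S} (ψ : SMap X Y) : Prop :=
  Function.Surjective ψ.toFun ∧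
    ∀ (M : SAct S), FinPresented M → ∀ f : SMap M Y, ∃ g : SMap M X, ψ.comp g = f

/-- The class of retracts of coproducts of finitely presented acts. -/
def RIFPClass (S : Type u) [Monoid S] : ActClass S :=
  fun A => ∃ (ι : Type u) (F : ι → SAct S),
    (∀ i, FinPresented (F i)) ∧ ActRetract A (SAct.sigmaCoprod F)

/-- The one-element `S`-act. -/
def oneAct (S : Type u) [Monoid S] : SAct S :=
  ⟨PUnit, fun _ _ => PUnit.unit, fun _ => rfl, fun _ _ _ => rfl⟩

/-- The unique map to the one-element act. -/
def bangMap (A : SAct S) : SMap A (oneAct S) := ⟨fun _ => PUnit.unit, fun _ _ => rfl⟩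

/-- The monoid `S` as a right `S`-act. -/
def regAct (S : Type u) [Monoid S] : SAct S := ⟨S, fun a s => a * s, mul_one, mul_assoc⟩

/-- The set of fixed points of an `S`-act. -/
def FixSet (A : SAct S) : Set A.carrier := {a | ∀ s : S, A.act a s = a}

/-- The Rees quotient of `Y` collapsing the subset `T` (closed under the action) to a point. -/
def reesQuot (Y : SAct S) (T : Set Y.carrier) (hT : ∀ t ∈ T, ∀ s : S, Y.act t s ∈ T) :
    SAct S where
  carrier := Quot (fun a b => a = b ∨ (a ∈ T ∧ b ∈ T))
  act q s := Quot.lift (fun y => Quot.mk _ (Y.act y s))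
    (fun a b hab => by
      rcases hab with h | ⟨ha, hb⟩
      · rw [h]
      · exact Quot.sound (Or.inr ⟨hT a ha s, hT b hb s⟩)) q
  act_one q := by
    induction q using Quot.ind with
    | _ y => exact congrArg (Quot.mk _) (Y.act_one y)
  act_mul q s t := by
    induction q using Quot.ind with
    | _ y => exact congrArg (Quot.mk _) (Y.act_mul y s t)

/-- The class of monomorphisms whose Rees quotient lies in `𝒳`. -/
def XMonoClass (𝒳 : ActClass S) : MapClass S :=
  fun {X Y} f =>
    Function.Injective f.toFun ∧
      𝒳 (reesQuot Y (Set.range f.toFun)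
        (fun t ht s => by
          obtain ⟨x, rfl⟩ := ht
          exact ⟨X.act x s, f.map_act x s⟩))

/-- The type of all `S`-maps (arrows). -/
def ArrowCls (S : Type u) [Monoid S] : Type (u + 1) := Σ (A B : SAct S), SMap A B

/-- The class of pushouts of maps in `𝒞`. -/
def pushoutsOf (𝒞 : MapClass S) : MapClass S :=
  fun {X P} fbar => ∃ (A B : SAct S) (f : SMap A B) (u : SMap A X) (v : SMap B P),
    𝒞 f ∧ IsPushoutSq f u fbar v

/-- `h` is a transfinite composition of maps in `𝒟`. -/
def IsTransfiniteCompOf (𝒟 : MapClass S) {A L : SAct S} (h : SMap A L) : Prop :=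
  ∃ (lam : Ordinal.{u}), Ordinal.omega0 ≤ lam ∧
    ∃ (Φ : LambdaSequence S lam) (h0 : (0 : Ordinal.{u}) < lam),
      (∀ (b : Ordinal.{u}) (hb : b + 1 < lam),
        𝒟 (Φ.seq.map b (b + 1) (le_self_add (a := b) (b := 1)) hb)) ∧
      Φ.seq.obj 0 h0 = A ∧ Φ.cocone.pt = L ∧ HEq (Φ.cocone.ι 0 h0) h

/-- `ret(𝒞)`: retracts of transfinite compositions of pushouts of maps in `𝒞`. -/
def retClass (𝒞 : MapClass S) : MapClass S :=
  fun {A _} g => ∃ (B : SAct S) (f : SMap A B),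
    IsTransfiniteCompOf (pushoutsOf 𝒞) f ∧ RetractOfMap g f

/-- The class of pure epimorphisms. -/
def PureEpiClass (S : Type u) [Monoid S] : MapClass S := fun {_ _} f => IsPureEpi f

/-- The subact `{z}` of `S`, for a left zero `z`. -/
def zSub (z : S) (hz : ∀ s : S, z * s = z) : SAct S :=
  (regAct S).sub {z} (fun t ht s => by
    obtain rfl : t = z := ht
    exact hz s)

/-- The inclusion `{z} → S`, for a left zero `z`. -/
def zIncl (z : S) (hz : ∀ s : S, z * s = z) : SMap (zSub z hz) (regAct S) :=
  ⟨fun t => t.1, fun _ _ => rfl⟩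

/-- The subact `K_d = g⁻¹(d)` of `C`, for a fixed point `d` of `D`. -/
def kerAct {C D : SAct S} (g : SMap C D) (d : D.carrier) (hd : d ∈ FixSet D) : SAct S :=
  C.sub {c | g.toFun c = d} (fun c hc s => by
    simp only [Set.mem_setOf_eq] at hc ⊢
    rw [g.map_act, hc]
    exact hd s)

/-- A centred `S`-act: an act with exactly one fixed point. -/
def CAct (S : Type u) [Monoid S] : Type (u + 1) :=
  {A : SAct S // ∃! a : A.carrier, ∀ s : S, A.act a s = a}

/-- A class of maps of centred `S`-acts. -/
abbrev MapClassC (S : Type u) [Monoid S] : Type (u + 1) :=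
  ∀ (A B : CAct S), SMap A.1 B.1 → Prop

/-- `C^□` in the category of centred `S`-acts. -/
def rlpCC (𝒞 : MapClassC S) : MapClassC S :=
  fun _ _ g => ∀ (X Y : CAct S) (f : SMap X.1 Y.1), 𝒞 X Y f → Lifts f g

/-- `□C` in the category of centred `S`-acts. -/
def llpCC (𝒞 : MapClassC S) : MapClassC S :=
  fun _ _ f => ∀ (X Y : CAct S) (g : SMap X.1 Y.1), 𝒞 X Y g → Lifts f g

/-- A weak factorization system in the category of centred `S`-acts. -/
structure IsWFSC (L R : MapClassC S) : Prop where
  rlp_eq : ∀ (A B : CAct S) (g : SMap A.1 B.1), R A B g ↔ rlpCC L A B g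
  llp_eq : ∀ (A B : CAct S) (f : SMap A.1 B.1), L A B f ↔ llpCC R A B f
  factor : ∀ (A B : CAct S) (h : SMap A.1 B.1),
    ∃ (C : CAct S) (f : SMap A.1 C.1) (g : SMap C.1 B.1), L A C f ∧ R C B g ∧ g.comp f = h

/-- The one-element centred `S`-act `0`. -/
def oneCAct (S : Type u) [Monoid S] : CAct S :=
  ⟨oneAct S, PUnit.unit, fun _ => rfl, fun _ _ => rfl⟩

/-- The unique map `0 → X` of centred `S`-acts. -/
noncomputable def zeroTo (X : CAct S) : SMap (oneCAct S).1 X.1 :=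
  ⟨fun _ => X.2.choose, fun _ s => (X.2.choose_spec.1 s).symm⟩

/-!
A free construction replaces the transfinite small object argument. Given a small family of maps
`c i : X i → Y i` and `h : A → B`, let `P` consist of the points of `A` together with formal cells
`cell i u b y`: the point `y` of a copy of `Y i`, attached along `c i` by a map `u : X i → P` and
sent to `B` by `b`, modulo the identification of `cell i u b (c i x · s)` with `u x · s`. Since
the terms form an inductive type, cells may be attached along maps into `P` itself, so `P → B`
lifts against every `c i` on the nose; and `A → P` lifts against any map with the right lifting
property for all `c i`, by recursion on terms, choosing one lift per cell. Smallness of the family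
keeps `P` in the universe of the acts. The rest is the Galois connection `C^□ = (□(C^□))^□`.
-/

theorem SMap.ext {A B : SAct S} {f g : SMap A B} (h : ∀ a, f.toFun a = g.toFun a) : f = g := by
  cases f; cases g
  congr
  exact funext h

theorem SMap.congr_apply {A B : SAct S} {f g : SMap A B} (h : f = g) (a : A.carrier) :
    f.toFun a = g.toFun a :=
  h ▸ rfl

theorem rlpC_llpC_rlpC_iff (𝒞 : MapClass S) {C D : SAct S} (g : SMap C D) :
    rlpC (llpC (rlpC 𝒞)) g ↔ rlpC 𝒞 g :=
  ⟨fun hg _ _ f hf => hg f fun _ hg' => hg' f hf, fun hg _ _ _ hf => hf _ hg⟩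

structure CellData (S : Type u) [Monoid S] : Type (u + 1) where
  ι : Type u
  X : ι → SAct S
  Y : ι → SAct S
  c : ∀ i, SMap (X i) (Y i)
  A : SAct S
  B : SAct S
  h : SMap A B

namespace CellData

inductive Term (E : CellData S) : Type u
  | ofA : E.A.carrier → Term E
  | cell (i : E.ι) (u : (E.X i).carrier → Term E) (b : SMap (E.Y i) E.B)
      (y : (E.Y i).carrier) : Term E

variable {E : CellData S}

namespace Term

def act : Term E → S → Term E
  | ofA a, s => ofA (E.A.act a s)
  | cell i u b y, s => cell i u b ((E.Y i).act y s)

theorem act_one (p : Term E) : p.act 1 = p := by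
  cases p with
  | ofA a => exact congrArg ofA (E.A.act_one a)
  | cell i u b y => exact congrArg (cell i u b) ((E.Y i).act_one y)

theorem act_act (p : Term E) (s t : S) : (p.act s).act t = p.act (s * t) := by
  cases p with
  | ofA a => exact congrArg ofA (E.A.act_mul a s t)
  | cell i u b y => exact congrArg (cell i u b) ((E.Y i).act_mul y s t)

def proj : Term E → E.B.carrier
  | ofA a => E.h.toFun a
  | cell _ _ b y => b.toFun y

theorem proj_act (p : Term E) (s : S) : (p.act s).proj = E.B.act p.proj s := by
  cases p with
  | ofA a => exact E.h.map_act a s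
  | cell i u b y => exact b.map_act y s

end Term

/- A partial equivalence relation: `Rel p p` says that `p` is well formed, i.e. each cell in it
is attached along a map that is equivariant up to `Rel` and lies over its `b`. Its quotient
is the middle object of the factorization. -/
inductive Rel : Term E → Term E → Prop
  | ofA (a : E.A.carrier) : Rel (.ofA a) (.ofA a)
  | cell (i : E.ι) (u : (E.X i).carrier → Term E) (b : SMap (E.Y i) E.B) (y : (E.Y i).carrier)
      (hu : ∀ x, Rel (u x) (u x))
      (hact : ∀ x s, Rel (u ((E.X i).act x s)) ((u x).act s))
      (hb : ∀ x, (u x).proj = b.toFun ((E.c i).toFun x)) :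
      Rel (.cell i u b y) (.cell i u b y)
  | symm {p q : Term E} : Rel p q → Rel q p
  | trans {p q r : Term E} : Rel p q → Rel q r → Rel p r
  | glue (i : E.ι) (u : (E.X i).carrier → Term E) (b : SMap (E.Y i) E.B)
      (hu : ∀ x, Rel (u x) (u x))
      (hact : ∀ x s, Rel (u ((E.X i).act x s)) ((u x).act s))
      (hb : ∀ x, (u x).proj = b.toFun ((E.c i).toFun x)) (x : (E.X i).carrier) (s : S) :
      Rel (.cell i u b ((E.Y i).act ((E.c i).toFun x) s)) ((u x).act s)

def Term.Coherent : Term E → Prop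
  | .ofA _ => True
  | .cell i u b _ => (∀ x, Rel (u x) (u x)) ∧ (∀ x s, Rel (u ((E.X i).act x s)) ((u x).act s)) ∧
      ∀ x, (u x).proj = b.toFun ((E.c i).toFun x)

theorem Term.coherent_act (p : Term E) (s : S) : (p.act s).Coherent ↔ p.Coherent := by
  cases p <;> rfl

namespace Rel

theorem refl_left {p q : Term E} (h : Rel p q) : Rel p p := h.trans h.symm

theorem coherent {p q : Term E} (h : Rel p q) : p.Coherent ∧ q.Coherent := by
  induction h with
  | ofA => exact ⟨trivial, trivial⟩
  | cell i u b y hu hact hb => exact ⟨⟨hu, hact, hb⟩, ⟨hu, hact, hb⟩⟩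
  | symm _ ih => exact ih.symm
  | trans _ _ ih₁ ih₂ => exact ⟨ih₁.1, ih₂.2⟩
  | glue i u b hu hact hb x s ihu _ =>
    exact ⟨⟨hu, hact, hb⟩, ((u x).coherent_act s).mpr (ihu x).1⟩

theorem cell_self_iff {i : E.ι} {u : (E.X i).carrier → Term E} {b : SMap (E.Y i) E.B}
    {y : (E.Y i).carrier} : Rel (.cell i u b y) (.cell i u b y) ↔
      (∀ x, Rel (u x) (u x)) ∧ (∀ x s, Rel (u ((E.X i).act x s)) ((u x).act s)) ∧
        ∀ x, (u x).proj = b.toFun ((E.c i).toFun x) :=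
  ⟨fun h => h.coherent.1, fun ⟨hu, hact, hb⟩ => .cell i u b y hu hact hb⟩

theorem act {p q : Term E} (h : Rel p q) (t : S) : Rel (p.act t) (q.act t) := by
  induction h with
  | ofA a => exact .ofA _
  | cell i u b y hu hact hb => exact .cell i u b _ hu hact hb
  | symm _ ih => exact ih.symm
  | trans _ _ ih₁ ih₂ => exact ih₁.trans ih₂
  | glue i u b hu hact hb x s =>
    have h := Rel.glue i u b hu hact hb x (s * t)
    rwa [← (E.Y i).act_mul, ← Term.act_act] at h

theorem proj_eq {p q : Term E} (h : Rel p q) : p.proj = q.proj := by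
  induction h with
  | ofA | cell => rfl
  | symm _ ih => exact ih.symm
  | trans _ _ ih₁ ih₂ => exact ih₁.trans ih₂
  | glue i u b hu hact hb x s =>
    show b.toFun _ = ((u x).act s).proj
    rw [Term.proj_act, b.map_act, hb x]

theorem glue_one (i : E.ι) (u : (E.X i).carrier → Term E) (b : SMap (E.Y i) E.B)
    (hu : ∀ x, Rel (u x) (u x)) (hact : ∀ x s, Rel (u ((E.X i).act x s)) ((u x).act s))
    (hb : ∀ x, (u x).proj = b.toFun ((E.c i).toFun x)) (x : (E.X i).carrier) :
    Rel (.cell i u b ((E.c i).toFun x)) (u x) := by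
  have h := Rel.glue i u b hu hact hb x 1
  rwa [(E.Y i).act_one, Term.act_one] at h

end Rel

def Point (E : CellData S) : Type u := {p : Term E // Rel p p}

instance Point.setoid (E : CellData S) : Setoid (Point E) where
  r p q := Rel p.1 q.1
  iseqv := ⟨fun p => p.2, Rel.symm, Rel.trans⟩

def mid (E : CellData S) : SAct S where
  carrier := Quotient (Point.setoid E)
  act p s := Quotient.lift (fun p : Point E => ⟦⟨p.1.act s, p.2.act s⟩⟧)
    (fun _ _ hpq => Quotient.sound (Rel.act hpq s)) p
  act_one p := by
    induction p using Quotient.ind with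
    | _ p => exact congrArg (Quotient.mk _) (Subtype.ext p.1.act_one)
  act_mul p s t := by
    induction p using Quotient.ind with
    | _ p => exact congrArg (Quotient.mk _) (Subtype.ext (p.1.act_act s t))

def left (E : CellData S) : SMap E.A E.mid where
  toFun a := ⟦⟨.ofA a, .ofA a⟩⟧
  map_act _ _ := rfl

def right (E : CellData S) : SMap E.mid E.B where
  toFun := Quotient.lift (fun p : Point E => p.1.proj) fun _ _ h => Rel.proj_eq h
  map_act p s := by
    induction p using Quotient.ind with
    | _ p => exact p.1.proj_act s

theorem right_comp_left (E : CellData S) : E.right.comp E.left = E.h :=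
  SMap.ext fun _ => rfl

theorem right_lifts (E : CellData S) (i : E.ι) : Lifts (E.c i) E.right := by
  intro u v hsq
  choose rep hrep using fun x => Quotient.exists_rep (u.toFun x)
  let w : (E.X i).carrier → Term E := fun x => (rep x).1
  have hu : ∀ x, Rel (w x) (w x) := fun x => (rep x).2
  have hact : ∀ x s, Rel (w ((E.X i).act x s)) ((w x).act s) := by
    intro x s
    refine Quotient.exact (?_ : (⟦rep ((E.X i).act x s)⟧ : E.mid.carrier) =
      ⟦⟨(w x).act s, (hu x).act s⟩⟧)
    rw [hrep, u.map_act, ← hrep x]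
    rfl
  have hb : ∀ x, (w x).proj = v.toFun ((E.c i).toFun x) := by
    intro x
    have h : E.right.toFun (u.toFun x) = v.toFun ((E.c i).toFun x) := SMap.congr_apply hsq x
    rwa [← hrep x] at h
  refine ⟨⟨fun y => ⟦⟨.cell i w v y, .cell i w v y hu hact hb⟩⟧, fun _ _ => rfl⟩,
    SMap.ext fun x => ?_, SMap.ext fun _ => rfl⟩
  show (⟦⟨.cell i w v ((E.c i).toFun x), _⟩⟧ : E.mid.carrier) = u.toFun x
  rw [← hrep x]
  exact Quotient.sound (Rel.glue_one i w v hu hact hb x)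

structure LiftingProblem (E : CellData S) where
  C : SAct S
  D : SAct S
  g : SMap C D
  hg : ∀ i, Lifts (E.c i) g
  u : SMap E.A C
  v : SMap E.mid D
  comm : g.comp u = v.comp E.left

namespace LiftingProblem

variable (Q : LiftingProblem E)

def cellBottom (i : E.ι) (w : (E.X i).carrier → Term E) (b : SMap (E.Y i) E.B)
    (hw : ∀ y, Rel (.cell i w b y) (.cell i w b y)) : SMap (E.Y i) Q.D where
  toFun y := Q.v.toFun ⟦⟨.cell i w b y, hw y⟩⟧
  map_act y s := Q.v.map_act ⟦⟨.cell i w b y, hw y⟩⟧ s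

def CellLifts (i : E.ι) (t : (E.X i).carrier → Q.C.carrier) (vb : SMap (E.Y i) Q.D) : Prop :=
  ∃ ℓ : SMap (E.Y i) Q.C, (∀ x, ℓ.toFun ((E.c i).toFun x) = t x) ∧ Q.g.comp ℓ = vb

theorem cellLifts_of_isEmpty (i : E.ι) (t : (E.X i).carrier → Q.C.carrier)
    (vb : SMap (E.Y i) Q.D) (hX : IsEmpty (E.X i).carrier) : Q.CellLifts i t vb := by
  obtain ⟨ℓ, -, hℓ⟩ := Q.hg i ⟨hX.elim, fun x => hX.elim x⟩ vb (SMap.ext fun x => hX.elim x)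
  exact ⟨ℓ, fun x => hX.elim x, hℓ⟩

open Classical in
/-- The fallback branches are never taken on well-formed cells; they only make this total. -/
noncomputable def cellVal (i : E.ι) (t : (E.X i).carrier → Q.C.carrier) (vb : SMap (E.Y i) Q.D)
    (y : (E.Y i).carrier) : Q.C.carrier :=
  if hc : Q.CellLifts i t vb then hc.choose.toFun y
  else if hX : Nonempty (E.X i).carrier then t hX.some
  else absurd (Q.cellLifts_of_isEmpty i t vb (not_nonempty_iff.mp hX)) hc

noncomputable def val : ∀ p : Term E, Rel p p → Q.C.carrier
  | .ofA a, _ => Q.u.toFun a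
  | .cell i w b y, h =>
      Q.cellVal i (fun x => val (w x) ((Rel.cell_self_iff.mp h).1 x))
        (Q.cellBottom i w b fun _ => Rel.cell_self_iff.mpr (Rel.cell_self_iff.mp h)) y

theorem val_congr {p p' : Term E} (h : p = p') (hp : Rel p p) (hp' : Rel p' p') :
    Q.val p hp = Q.val p' hp' := by
  subst h; rfl

def IsLiftAt (p : Term E) : Prop :=
  ∀ hp : Rel p p, (∀ s hps, Q.val (p.act s) hps = Q.C.act (Q.val p hp) s) ∧
    Q.g.toFun (Q.val p hp) = Q.v.toFun (⟦⟨p, hp⟩⟧ : E.mid.carrier)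

theorem isLiftAt_ofA (a : E.A.carrier) : Q.IsLiftAt (.ofA a) :=
  fun _ => ⟨fun s _ => Q.u.map_act a s, SMap.congr_apply Q.comm a⟩

theorem IsLiftAt.act {Q : LiftingProblem E} {p : Term E} (hlift : Q.IsLiftAt p) (hp : Rel p p)
    (s : S) : Q.IsLiftAt (p.act s) := by
  intro hps
  have hval : Q.val (p.act s) hps = Q.C.act (Q.val p hp) s := ((hlift hp).1 s hps)
  refine ⟨fun t hpst => ?_, ?_⟩
  · rw [Q.val_congr (p.act_act s t) hpst (hp.act (s * t)), (hlift hp).1, hval, Q.C.act_mul]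
  · rw [hval, Q.g.map_act, (hlift hp).2]
    exact (Q.v.map_act _ s).symm

theorem exists_cell_lift (i : E.ι) (w : (E.X i).carrier → Term E) (b : SMap (E.Y i) E.B)
    (hu : ∀ x, Rel (w x) (w x)) (hact : ∀ x s, Rel (w ((E.X i).act x s)) ((w x).act s))
    (hb : ∀ x, (w x).proj = b.toFun ((E.c i).toFun x)) (hlift : ∀ x, Q.IsLiftAt (w x))
    (hval_act : ∀ x s, Q.val _ (hu ((E.X i).act x s)) = Q.val _ ((hu x).act s)) :
    ∃ ℓ : SMap (E.Y i) Q.C,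
      (∀ y h, Q.val (.cell i w b y) h = ℓ.toFun y) ∧
      (∀ x, ℓ.toFun ((E.c i).toFun x) = Q.val (w x) (hu x)) ∧
      ∀ y, Q.IsLiftAt (.cell i w b y) := by
  let vb := Q.cellBottom i w b fun y => .cell i w b y hu hact hb
  let t : SMap (E.X i) Q.C :=
    ⟨fun x => Q.val (w x) (hu x), fun x s => (hval_act x s).trans ((hlift x (hu x)).1 s _)⟩
  have hsq : Q.g.comp t = vb.comp (E.c i) := by
    refine SMap.ext fun x => (hlift x (hu x)).2.trans ?_
    exact congrArg Q.v.toFun (Quotient.sound (Rel.glue_one i w b hu hact hb x).symm)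
  obtain ⟨ℓ, hℓc, hℓg⟩ := Q.hg i t vb hsq
  have hc : Q.CellLifts i (fun x => Q.val (w x) (hu x)) vb := ⟨ℓ, SMap.congr_apply hℓc, hℓg⟩
  have hval : ∀ y h, Q.val (.cell i w b y) h = hc.choose.toFun y := fun y h => by
    simp only [val, cellVal]
    exact dif_pos hc
  refine ⟨hc.choose, hval, hc.choose_spec.1, fun y h => ?_⟩
  rw [hval]
  exact ⟨fun s h' => (hval _ h').trans (hc.choose.map_act y s),
    SMap.congr_apply hc.choose_spec.2 y⟩

theorem isLiftAt_and_val_eq_of_rel {p q : Term E} (h : Rel p q) :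
    Q.IsLiftAt p ∧ Q.IsLiftAt q ∧ Q.val p h.refl_left = Q.val q h.symm.refl_left := by
  induction h with
  | ofA a => exact ⟨Q.isLiftAt_ofA a, Q.isLiftAt_ofA a, rfl⟩
  | cell i w b y hu hact hb ihu ihact =>
    obtain ⟨ℓ, -, -, hlift⟩ := Q.exists_cell_lift i w b hu hact hb
      (fun x => (ihu x).1) (fun x s => (ihact x s).2.2)
    exact ⟨hlift y, hlift y, rfl⟩
  | symm _ ih => exact ⟨ih.2.1, ih.1, ih.2.2.symm⟩
  | trans _ _ ih₁ ih₂ => exact ⟨ih₁.1, ih₂.2.1, ih₁.2.2.trans ih₂.2.2⟩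
  | glue i w b hu hact hb x s ihu ihact =>
    obtain ⟨ℓ, hval, hℓc, hlift⟩ := Q.exists_cell_lift i w b hu hact hb
      (fun x => (ihu x).1) (fun x s => (ihact x s).2.2)
    refine ⟨hlift _, (ihu x).1.act (hu x) s, ?_⟩
    rw [hval, ℓ.map_act, hℓc, ((ihu x).1 (hu x)).1]

end LiftingProblem

theorem left_lifts (E : CellData S) {C D : SAct S} (g : SMap C D) (hg : ∀ i, Lifts (E.c i) g) :
    Lifts E.left g := by
  intro u v comm
  let Q : LiftingProblem E := ⟨C, D, g, hg, u, v, comm⟩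
  refine ⟨⟨Quotient.lift (fun p : Point E => Q.val p.1 p.2)
    (fun _ _ h => (Q.isLiftAt_and_val_eq_of_rel h).2.2), ?_⟩,
    SMap.ext fun _ => rfl, SMap.ext fun p => ?_⟩
  · intro p s
    induction p using Quotient.ind with
    | _ p => exact ((Q.isLiftAt_and_val_eq_of_rel p.2).1 p.2).1 s _
  · induction p using Quotient.ind with
    | _ p => exact ((Q.isLiftAt_and_val_eq_of_rel p.2).1 p.2).2

end CellData

theorem exists_factorization_of_small (𝒞 : MapClass S)
    (hsmall : Small.{u} {a : ArrowCls S // 𝒞 a.2.2}) {A B : SAct S} (h : SMap A B) :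
    ∃ (P : SAct S) (f : SMap A P) (g : SMap P B), llpC (rlpC 𝒞) f ∧ rlpC 𝒞 g ∧ g.comp f = h := by
  let e := equivShrink {a : ArrowCls S // 𝒞 a.2.2}
  let E : CellData S := ⟨Shrink _, fun i => (e.symm i).1.1, fun i => (e.symm i).1.2.1,
    fun i => (e.symm i).1.2.2, A, B, h⟩
  refine ⟨E.mid, E.left, E.right, fun g hg => E.left_lifts g fun i => hg _ (e.symm i).2,
    fun {X Y} f hf => ?_, E.right_comp_left⟩
  have hlift : Lifts (e.symm (e ⟨⟨X, Y, f⟩, hf⟩)).1.2.2 E.right := E.right_lifts _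
  rwa [e.symm_apply_apply] at hlift

theorem statement17_general (𝒞 : MapClass S)
    (hsmall : Small.{u} {a : ArrowCls S // 𝒞 a.2.2}) :
    IsWFS (llpC (rlpC 𝒞)) (rlpC 𝒞) :=
  ⟨fun g => (rlpC_llpC_rlpC_iff 𝒞 g).symm, fun _ => Iff.rfl,
    fun h => exists_factorization_of_small 𝒞 hsmall h⟩

theorem statement17 (𝒞 : MapClass S)
    (hsmall : Small.{u} {a : ArrowCls S // 𝒞 a.2.2})
    (hcop : ∀ (ι : Type u) (A B : ι → SAct S) (f : ∀ i, SMap (A i) (B i)),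
      (∀ i, 𝒞 (f i)) → 𝒞 (coprodMap f)) :
    IsWFS (llpC (rlpC 𝒞)) (rlpC 𝒞) :=
  statement17_general 𝒞 hsmall
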